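/- For the 7-dimensional Lie algebra L_{7,7} with nonzero brackets [X_1,X_2]=2X_2, [X_1,X_3]=-2X_3, [X_2,X_3]=X_1, [X_1,X_4]=X_4, [X_1,X_5]=-X_5, [X_2,X_5]=X_4, [X_2,X_7]=X_6, [X_3,X_4]=X_5, [X_1,X_6]=X_6, [X_1,X_7]=-X_7, [X_3,X_6]=X_7, the polynomial I_1 = x_4 x_7 - x_5 x_6 is annihilated by all coadjoint vector fields X̂_i = C_{ij}^k x_k ∂/∂x_j, i = 1,…,7. -/

import Mathlib

open scoped BigOperators

noncomputable def Xhat {n : ℕ} (C : Fin n → Fin n → Fin n → ℝ)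
    (F : (Fin n → ℝ) → ℝ) (i : Fin n) (x : Fin n → ℝ) : ℝ :=
  ∑ j, ∑ k, C i j k * x k * fderiv ℝ F x (Pi.single j 1)

def C77 : Fin 7 → Fin 7 → Fin 7 → ℝ := fun i j k =>
  match i.1, j.1, k.1 with
  | 0, 1, 1 => 2
  | 1, 0, 1 => -2
  | 0, 2, 2 => -2
  | 2, 0, 2 => 2
  | 1, 2, 0 => 1
  | 2, 1, 0 => -1
  | 0, 3, 3 => 1
  | 3, 0, 3 => -1
  | 0, 4, 4 => -1
  | 4, 0, 4 => 1
  | 1, 4, 3 => 1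
  | 4, 1, 3 => -1
  | 1, 6, 5 => 1
  | 6, 1, 5 => -1
  | 2, 3, 4 => 1
  | 3, 2, 4 => -1
  | 0, 5, 5 => 1
  | 5, 0, 5 => -1
  | 0, 6, 6 => -1
  | 6, 0, 6 => 1
  | 2, 5, 6 => 1
  | 5, 2, 6 => -1
  | _, _, _ => 0

/-!
The coadjoint field `X̂_i` at `x` is the derivative in the direction `ξ = ad*_{X_i} x`. For `i ≥ 4`
that direction only has components along `x_1, x_2, x_3`, on which `I_1` does not depend. For
`i ≤ 3` it acts on the pairs `(x_4, x_5)` and `(x_6, x_7)` by one and the same traceless matrix,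
and `I_1` is the determinant of the matrix with these two columns, which a traceless matrix
leaves infinitesimally unchanged. Indices here are the paper's; the coordinates below start at 0.
-/

theorem Xhat_eq_fderiv_apply {n : ℕ} (C : Fin n → Fin n → Fin n → ℝ) (F : (Fin n → ℝ) → ℝ)
    (i : Fin n) (x : Fin n → ℝ) :
    Xhat C F i x = fderiv ℝ F x (fun j => ∑ k, C i j k * x k) := by
  conv_rhs => rw [pi_eq_sum_univ' (fun j => ∑ k, C i j k * x k)]
  simp only [Xhat, map_sum, map_smul, smul_eq_mul, Finset.sum_mul]

theorem fderiv_coord_mul_sub_coord_mul_apply {ι : Type*} [Fintype ι] (a b c d : ι)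
    (x v : ι → ℝ) :
    fderiv ℝ (fun y : ι → ℝ => y a * y b - y c * y d) x v =
      x a * v b + x b * v a - (x c * v d + x d * v c) := by
  have coord : ∀ k : ι, HasFDerivAt (fun y : ι → ℝ => y k)
      (ContinuousLinearMap.proj (R := ℝ) (φ := fun _ : ι => ℝ) k) x := fun k =>
    (ContinuousLinearMap.proj (R := ℝ) (φ := fun _ : ι => ℝ) k).hasFDerivAt
  have hasDeriv : HasFDerivAt (fun y : ι → ℝ => y a * y b - y c * y d) _ x :=
    ((coord a).mul (coord b)).sub ((coord c).mul (coord d))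
  rw [hasDeriv.fderiv]
  simp

theorem L77_invariant :
    ∀ (i : Fin 7) (x : Fin 7 → ℝ),
      Xhat C77 (fun y => y 3 * y 6 - y 4 * y 5) i x = 0 := by
  intro i x
  rw [Xhat_eq_fderiv_apply, fderiv_coord_mul_sub_coord_mul_apply]
  fin_cases i <;> simp [C77, Fin.sum_univ_seven] <;> ring
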